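/- arXiv:1606.03563 — 3 statements merged into one kernel-verified Lean document; each statement's English description precedes it below -/
import Mathlib

section
/- For every n ≥ 3 and every m ∈ {1,…,n+1}, the assignment on generators q_m(a_{ijk}) = 1 if m ∈ {i,j,k}, and q_m(a_{ijk}) = a_{i'j'k'} otherwise (where each of i,j,k strictly greater than m is decreased by 1 and each index less than m is unchanged) sends every defining relator of G_{n+1}^3 to the identity of G_n^3, and hence extends to a group homomorphism q_m : G_{n+1}^3 → G_n^3. -/
namespace GnkBrunnian

/-! ## Index types for generators -/

/-- Validity of a pair index: `1 ≤ i < j ≤ n`. -/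
abbrev P2ok (n : ℕ) (p : ℕ × ℕ) : Prop := 1 ≤ p.1 ∧ p.1 < p.2 ∧ p.2 ≤ n

/-- Index type for the generators `a_{ij}` of `G_n^2` (and `b_{ij}` of `PB_n`). -/
abbrev PIdx (n : ℕ) := {p : ℕ × ℕ // P2ok n p}

/-- Validity of a triple index: `1 ≤ i < j < k ≤ n`. -/
abbrev T3ok (n : ℕ) (t : ℕ × ℕ × ℕ) : Prop :=
  1 ≤ t.1 ∧ t.1 < t.2.1 ∧ t.2.1 < t.2.2 ∧ t.2.2 ≤ n

/-- Index type for the generators `a_{ijk}` of `G_n^3`. -/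
abbrev TIdx (n : ℕ) := {t : ℕ × ℕ × ℕ // T3ok n t}

def sort2 (a b : ℕ) : ℕ × ℕ := (min a b, max a b)

def sort3 (a b c : ℕ) : ℕ × ℕ × ℕ :=
  (min a (min b c), a + b + c - min a (min b c) - max a (max b c), max a (max b c))

def pairSet {n : ℕ} (p : PIdx n) : Finset ℕ := {p.1.1, p.1.2}

def tripSet {n : ℕ} (t : TIdx n) : Finset ℕ := {t.1.1, t.1.2.1, t.1.2.2}

/-- Reindexing after deleting the strand `m` : indices above `m` are decreased by one. -/
def del (m x : ℕ) : ℕ := if m < x then x - 1 else x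

/-! ## The group `G_n^2` -/

/-- The free-group letter `a_{\{a,b\}}` (trivial if the index is out of range). -/
def fgen2 (n a b : ℕ) : FreeGroup (PIdx n) :=
  if h : P2ok n (sort2 a b) then FreeGroup.of ⟨sort2 a b, h⟩ else 1

/-- The defining relators of `G_n^2`. -/
def rels2 (n : ℕ) : Set (FreeGroup (PIdx n)) :=
  {r | ∃ a : PIdx n, r = .of a * .of a} ∪
  {r | ∃ i j k l : ℕ,
      1 ≤ i ∧ i ≤ n ∧ 1 ≤ j ∧ j ≤ n ∧ 1 ≤ k ∧ k ≤ n ∧ 1 ≤ l ∧ l ≤ n ∧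
      i ≠ j ∧ i ≠ k ∧ i ≠ l ∧ j ≠ k ∧ j ≠ l ∧ k ≠ l ∧
      r = fgen2 n i j * fgen2 n k l * (fgen2 n i j)⁻¹ * (fgen2 n k l)⁻¹} ∪
  {r | ∃ i j k : ℕ,
      1 ≤ i ∧ i ≤ n ∧ 1 ≤ j ∧ j ≤ n ∧ 1 ≤ k ∧ k ≤ n ∧ i ≠ j ∧ i ≠ k ∧ j ≠ k ∧
      r = fgen2 n i j * fgen2 n i k * fgen2 n j k *
          (fgen2 n j k * fgen2 n i k * fgen2 n i j)⁻¹}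

/-- The group `G_n^2`. -/
abbrev G2 (n : ℕ) := PresentedGroup (rels2 n)

/-- The generator `a_{\{a,b\}}` of `G_n^2` (trivial if the index is out of range). -/
def ggen2 (n a b : ℕ) : G2 n :=
  if h : P2ok n (sort2 a b) then PresentedGroup.of ⟨sort2 a b, h⟩ else 1

/-- The element of `G_n^2` represented by a word in the generators. -/
def toG2 {n : ℕ} (β : List (PIdx n)) : G2 n :=
  (β.map fun a => (PresentedGroup.of a : G2 n)).prod

/-! ## The group `G_n^3` -/

/-- The free-group letter `a_{\{a,b,c\}}` (trivial if the index is out of range). -/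
def fgen3 (n a b c : ℕ) : FreeGroup (TIdx n) :=
  if h : T3ok n (sort3 a b c) then FreeGroup.of ⟨sort3 a b c, h⟩ else 1

/-- The defining relators of `G_n^3`. -/
def rels3 (n : ℕ) : Set (FreeGroup (TIdx n)) :=
  {r | ∃ a : TIdx n, r = .of a * .of a} ∪
  {r | ∃ a b : TIdx n, (tripSet a ∩ tripSet b).card < 2 ∧
      r = .of a * .of b * (.of a)⁻¹ * (.of b)⁻¹} ∪
  {r | ∃ i j k l : ℕ,
      1 ≤ i ∧ i ≤ n ∧ 1 ≤ j ∧ j ≤ n ∧ 1 ≤ k ∧ k ≤ n ∧ 1 ≤ l ∧ l ≤ n ∧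
      i ≠ j ∧ i ≠ k ∧ i ≠ l ∧ j ≠ k ∧ j ≠ l ∧ k ≠ l ∧
      r = fgen3 n i j k * fgen3 n i j l * fgen3 n i k l * fgen3 n j k l *
          (fgen3 n j k l * fgen3 n i k l * fgen3 n i j l * fgen3 n i j k)⁻¹}

/-- The group `G_n^3`. -/
abbrev G3 (n : ℕ) := PresentedGroup (rels3 n)

/-- The generator `a_{\{a,b,c\}}` of `G_n^3` (trivial if the index is out of range). -/
def ggen3 (n a b c : ℕ) : G3 n :=
  if h : T3ok n (sort3 a b c) then PresentedGroup.of ⟨sort3 a b c, h⟩ else 1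

/-- The element of `G_n^3` represented by a word in the generators. -/
def toG3 {n : ℕ} (β : List (TIdx n)) : G3 n :=
  (β.map fun a => (PresentedGroup.of a : G3 n)).prod

/-! ## The pure braid group `PB_n` (standard Artin/Birman presentation) -/

/-- The defining relators of the pure braid group on `n` strands, in the standard
presentation on the generators `b_{ij} = A_{ij}`, `1 ≤ i < j ≤ n`. -/
def relsPB (n : ℕ) : Set (FreeGroup (PIdx n)) :=
  {x | ∃ r s i j : ℕ, P2ok n (r, s) ∧ P2ok n (i, j) ∧ (s < i ∨ (i < r ∧ s < j)) ∧
      x = (fgen2 n r s)⁻¹ * fgen2 n i j * fgen2 n r s * (fgen2 n i j)⁻¹} ∪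
  {x | ∃ r s j : ℕ, 1 ≤ r ∧ r < s ∧ s < j ∧ j ≤ n ∧
      x = (fgen2 n r s)⁻¹ * fgen2 n s j * fgen2 n r s *
          (fgen2 n r j * fgen2 n s j * (fgen2 n r j)⁻¹)⁻¹} ∪
  {x | ∃ r s j : ℕ, 1 ≤ r ∧ r < s ∧ s < j ∧ j ≤ n ∧
      x = (fgen2 n r s)⁻¹ * fgen2 n r j * fgen2 n r s *
          ((fgen2 n r j * fgen2 n s j) * fgen2 n r j * (fgen2 n r j * fgen2 n s j)⁻¹)⁻¹} ∪
  {x | ∃ r i s j : ℕ, 1 ≤ r ∧ r < i ∧ i < s ∧ s < j ∧ j ≤ n ∧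
      x = (fgen2 n r s)⁻¹ * fgen2 n i j * fgen2 n r s *
          ((fgen2 n r j * fgen2 n s j * (fgen2 n r j)⁻¹ * (fgen2 n s j)⁻¹) * fgen2 n i j *
           (fgen2 n r j * fgen2 n s j * (fgen2 n r j)⁻¹ * (fgen2 n s j)⁻¹)⁻¹)⁻¹}

/-- The pure braid group on `n` strands. -/
abbrev PB (n : ℕ) := PresentedGroup (relsPB n)

/-- The standard generator `b_{ij}` of `PB_n` (trivial if the index is out of range). -/
def pbgen (n a b : ℕ) : PB n :=
  if h : P2ok n (sort2 a b) then PresentedGroup.of ⟨sort2 a b, h⟩ else 1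

/-! ## The elements `c^n_{i,j}` and the homomorphism `φ_n` -/

/-- `c^n_{i,j} = (∏_{k=j+1}^{n} a_{ijk}) * (∏_{k=1, k∉{i,j}}^{j-1} a_{ijk}) ∈ G_n^3`. -/
def cElt (n i j : ℕ) : G3 n :=
  (((List.range' (j + 1) (n - j)).map fun k => ggen3 n i j k).prod) *
  (((List.range' 1 (j - 1)).map fun k => ggen3 n i j k).prod)

/-- The image of `b_{ij}` under `φ_n`:
`(c^n_{i,i+1})⁻¹ ⋯ (c^n_{i,j-1})⁻¹ (c^n_{i,j})² c^n_{i,j-1} ⋯ c^n_{i,i+1}`. -/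
def phiElt (n i j : ℕ) : G3 n :=
  (((List.range' (i + 1) (j - 1 - i)).map fun m => (cElt n i m)⁻¹).prod) *
  (cElt n i j) ^ 2 *
  (((List.range' (i + 1) (j - 1 - i)).reverse.map fun m => cElt n i m).prod)

/-- `q` is the strand-deletion homomorphism `q_m : G_n^3 → G_{n-1}^3`. -/
def IsShift3 (n m : ℕ) (q : G3 n →* G3 (n - 1)) : Prop :=
  ∀ i j k : ℕ, 1 ≤ i → i < j → j < k → k ≤ n →
    q (ggen3 n i j k) =
      if m = i ∨ m = j ∨ m = k then 1
      else ggen3 (n - 1) (del m i) (del m j) (del m k)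

/-- `p` is the strand-deletion homomorphism `p_m : PB_n → PB_{n-1}`. -/
def IsShiftPB (n m : ℕ) (p : PB n →* PB (n - 1)) : Prop :=
  ∀ i j : ℕ, 1 ≤ i → i < j → j ≤ n →
    p (pbgen n i j) =
      if m = i ∨ m = j then 1 else pbgen (n - 1) (del m i) (del m j)

/-- `φ` is the Manturov–Nikonov homomorphism `φ_n : PB_n → G_n^3`. -/
def IsPhi (n : ℕ) (φ : PB n →* G3 n) : Prop :=
  ∀ i j : ℕ, 1 ≤ i → i < j → j ≤ n → φ (pbgen n i j) = phiElt n i j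

/-! ## Words and good condition -/

def good2 {n : ℕ} (β : List (PIdx n)) : Prop := ∀ a : PIdx n, Even (β.count a)

def good3 {n : ℕ} (β : List (TIdx n)) : Prop := ∀ a : TIdx n, Even (β.count a)

/-! ## Free products of copies of `ℤ/2` -/

/-- The free product of copies of `ℤ/2ℤ` indexed by `ι`. -/
abbrev FP2 (ι : Type) := PresentedGroup {r : FreeGroup ι | ∃ a : ι, r = .of a * .of a}

/-- Indices `l ∈ {1,…,n} \ {i,j,k}`. -/
abbrev SIdx3 (n i j k : ℕ) := {l : ℕ // (1 ≤ l ∧ l ≤ n) ∧ l ≠ i ∧ l ≠ j ∧ l ≠ k}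

/-- The group `F_n^3` (for the fixed triple `(i,j,k)`). -/
abbrev F3 (n i j k : ℕ) := FP2 (SIdx3 n i j k → ZMod 2 × ZMod 2)

/-- Indices `k ∈ {1,…,n} \ {i,j}`. -/
abbrev SIdx2 (n i j : ℕ) := {l : ℕ // (1 ≤ l ∧ l ≤ n) ∧ l ≠ i ∧ l ≠ j}

/-- The group `F_n^2` (for the fixed pair `(i,j)`). -/
abbrev F2 (n i j : ℕ) := FP2 (SIdx2 n i j → ZMod 2)

/-! ## The MN-invariants `w_{(i,j)}` and `w_{(i,j,k)}` -/

/-- The number of occurrences of the generator `a_{\{a,b\}}` in a word over `G_n^2`. -/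
def cnt2 {n : ℕ} (β : List (PIdx n)) (a b : ℕ) : ℕ :=
  (β.filter fun x => decide (pairSet x = ({a, b} : Finset ℕ))).length

/-- The number of occurrences of the generator `a_{\{a,b,c\}}` in a word over `G_n^3`. -/
def cnt3 {n : ℕ} (β : List (TIdx n)) (a b c : ℕ) : ℕ :=
  (β.filter fun x => decide (tripSet x = ({a, b, c} : Finset ℕ))).length

/-- `i_c` for an occurrence of `a_{ij}` with prefix `pre`: `i_c(k) = N_{ik} + N_{jk} (mod 2)`. -/
def iC2 {n : ℕ} (i j : ℕ) (pre : List (PIdx n)) : SIdx2 n i j → ZMod 2 :=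
  fun k => ((cnt2 pre i k.1 + cnt2 pre j k.1 : ℕ) : ZMod 2)

/-- The MN-invariant `w_{(i,j)}` of a word over `G_n^2`. -/
def w2 {n : ℕ} (i j : ℕ) (β : List (PIdx n)) : F2 n i j :=
  (((β.zipIdx.map Prod.swap).filter fun x => decide (pairSet x.2 = ({i, j} : Finset ℕ))).map
    fun x => (PresentedGroup.of (iC2 i j (β.take x.1)) : F2 n i j)).prod

/-- `i_c` for an occurrence of `a_{ijk}` with prefix `pre`:
`i_c(l) = (N_{jkl} + N_{ijl}, N_{ikl} + N_{ijl}) (mod 2)`. -/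
def iC3 {n : ℕ} (i j k : ℕ) (pre : List (TIdx n)) : SIdx3 n i j k → ZMod 2 × ZMod 2 :=
  fun l => (((cnt3 pre j k l.1 + cnt3 pre i j l.1 : ℕ) : ZMod 2),
            ((cnt3 pre i k l.1 + cnt3 pre i j l.1 : ℕ) : ZMod 2))

/-- The MN-invariant `w_{(i,j,k)}` of a word over `G_n^3`. -/
def w3 {n : ℕ} (i j k : ℕ) (β : List (TIdx n)) : F3 n i j k :=
  (((β.zipIdx.map Prod.swap).filter fun x => decide (tripSet x.2 = ({i, j, k} : Finset ℕ))).map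
    fun x => (PresentedGroup.of (iC3 i j k (β.take x.1)) : F3 n i j k)).prod

/-! ## Explicit words for `c^n_{i,j}` and `φ_n(b_{ij})` -/

def tripMkS (n a b c : ℕ) : Option (TIdx n) :=
  if h : T3ok n (sort3 a b c) then some ⟨sort3 a b c, h⟩ else none

def pairMkS (n a b : ℕ) : Option (PIdx n) :=
  if h : P2ok n (sort2 a b) then some ⟨sort2 a b, h⟩ else none

/-- The defining word of `c^n_{i,j}`. -/
def cWord (n i j : ℕ) : List (TIdx n) :=
  ((List.range' (j + 1) (n - j)).filterMap fun k => tripMkS n i j k) ++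
  ((List.range' 1 (j - 1)).filterMap fun k => tripMkS n i j k)

/-- The defining word of `φ_n(b_{ij})`, with the inverses of the `c`-words expanded using
`a⁻¹ = a` for generators (i.e. by reversing the words). -/
def phiWord (n i j : ℕ) : List (TIdx n) :=
  (((List.range' (i + 1) (j - 1 - i)).map fun m => (cWord n i m).reverse).flatten) ++
  cWord n i j ++ cWord n i j ++
  (((List.range' (i + 1) (j - 1 - i)).reverse.map fun m => cWord n i m).flatten)

/-! ## The group `G_{n,p}^2` (parity) -/

/-- Index type for the generators `a_{ij}^ε` of `G_{n,p}^2`. -/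
abbrev PPIdx (n : ℕ) := PIdx n × ZMod 2

def fgenP2 (n a b : ℕ) (e : ZMod 2) : FreeGroup (PPIdx n) :=
  if h : P2ok n (sort2 a b) then FreeGroup.of (⟨sort2 a b, h⟩, e) else 1

/-- The defining relators of `G_{n,p}^2`. -/
def relsP2 (n : ℕ) : Set (FreeGroup (PPIdx n)) :=
  {r | ∃ a : PPIdx n, r = .of a * .of a} ∪
  {r | ∃ (i j k l : ℕ) (e e' : ZMod 2),
      1 ≤ i ∧ i ≤ n ∧ 1 ≤ j ∧ j ≤ n ∧ 1 ≤ k ∧ k ≤ n ∧ 1 ≤ l ∧ l ≤ n ∧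
      i ≠ j ∧ i ≠ k ∧ i ≠ l ∧ j ≠ k ∧ j ≠ l ∧ k ≠ l ∧
      r = fgenP2 n i j e * fgenP2 n k l e' * (fgenP2 n i j e)⁻¹ * (fgenP2 n k l e')⁻¹} ∪
  {r | ∃ (i j k : ℕ) (e1 e2 e3 : ZMod 2),
      1 ≤ i ∧ i < j ∧ j < k ∧ k ≤ n ∧ e1 + e2 + e3 = 0 ∧
      r = fgenP2 n i j e1 * fgenP2 n i k e2 * fgenP2 n j k e3 *
          (fgenP2 n j k e3 * fgenP2 n i k e2 * fgenP2 n i j e1)⁻¹}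

/-- The group `G_{n,p}^2`. -/
abbrev GP2 (n : ℕ) := PresentedGroup (relsP2 n)

/-- The element of `G_{n,p}^2` represented by a word in the generators. -/
def toGP2 {n : ℕ} (β : List (PPIdx n)) : GP2 n :=
  (β.map fun a => (PresentedGroup.of a : GP2 n)).prod

/-! ## The parity invariant `w^p_{ij}` on `G_{n,p}^2` -/

/-- The number of occurrences of `a_{\{a,b\}}^e` in a word over `G_{n,p}^2`. -/
def cntP2 {n : ℕ} (β : List (PPIdx n)) (a b : ℕ) (e : ZMod 2) : ℕ :=
  (β.filter fun x => decide (pairSet x.1 = ({a, b} : Finset ℕ) ∧ x.2 = e)).length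

/-- `i^p_c` for an occurrence of `a_{ij}^e` with prefix `pre`. -/
def iCP2 {n : ℕ} (i j : ℕ) (e : ZMod 2) (pre : List (PPIdx n)) : SIdx2 n i j → ZMod 2 :=
  fun k =>
    if e = 0 then ((cntP2 pre i k.1 0 + cntP2 pre j k.1 0 : ℕ) : ZMod 2)
    else ((cntP2 pre i k.1 0 + cntP2 pre j k.1 1 : ℕ) : ZMod 2)

/-- The invariant `w^p_{ij}` of a word over `G_{n,p}^2`. -/
def wP2 {n : ℕ} (i j : ℕ) (β : List (PPIdx n)) : F2 n i j :=
  (((β.zipIdx.map Prod.swap).filter fun x => decide (pairSet x.2.1 = ({i, j} : Finset ℕ))).map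
    fun x => (PresentedGroup.of (iCP2 i j x.2.2 (β.take x.1)) : F2 n i j)).prod

/-! ## The map `ψ_l : G_{n+1}^2 → G_{n,p}^2` -/

/-- The word over `G_{n,p}^2` obtained from a word over `G_{n+1}^2` by deleting the strand `l`
and recording parities. -/
def psiWord (n l : ℕ) (β : List (PIdx (n + 1))) : List (PPIdx n) :=
  (β.zipIdx.map Prod.swap).filterMap fun x =>
    if l = x.2.1.1 ∨ l = x.2.1.2 then none
    else (pairMkS n (del l x.2.1.1) (del l x.2.1.2)).map fun p =>
      (p, ((cnt2 (β.take x.1) x.2.1.1 l + cnt2 (β.take x.1) x.2.1.2 l : ℕ) : ZMod 2))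

/-! ## The group `G_{n,p}^3` (parity) -/

/-- Index type for the generators `a_{ijk}^ε` of `G_{n,p}^3`. -/
abbrev TPIdx (n : ℕ) := TIdx n × ZMod 2

def fgenP3 (n a b c : ℕ) (e : ZMod 2) : FreeGroup (TPIdx n) :=
  if h : T3ok n (sort3 a b c) then FreeGroup.of (⟨sort3 a b c, h⟩, e) else 1

/-- The defining relators of `G_{n,p}^3`. -/
def relsP3 (n : ℕ) : Set (FreeGroup (TPIdx n)) :=
  {r | ∃ a : TPIdx n, r = .of a * .of a} ∪
  {r | ∃ a b : TPIdx n, (tripSet a.1 ∩ tripSet b.1).card < 2 ∧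
      r = (.of a * .of b) ^ 2} ∪
  {r | ∃ (i j k l : ℕ) (ei ej ek el : ZMod 2),
      1 ≤ i ∧ i ≤ n ∧ 1 ≤ j ∧ j ≤ n ∧ 1 ≤ k ∧ k ≤ n ∧ 1 ≤ l ∧ l ≤ n ∧
      i ≠ j ∧ i ≠ k ∧ i ≠ l ∧ j ≠ k ∧ j ≠ l ∧ k ≠ l ∧
      (if max (max i j) (max k l) = i then ej + ek + el
       else if max (max i j) (max k l) = j then ei + ek + el
       else if max (max i j) (max k l) = k then ei + ej + el
       else ei + ej + ek) = 0 ∧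
      r = (fgenP3 n i j k el * fgenP3 n i j l ek * fgenP3 n i k l ej * fgenP3 n j k l ei) ^ 2}

/-- The group `G_{n,p}^3`. -/
abbrev GP3 (n : ℕ) := PresentedGroup (relsP3 n)

/-- The element of `G_{n,p}^3` represented by a word in the generators. -/
def toGP3 {n : ℕ} (β : List (TPIdx n)) : GP3 n :=
  (β.map fun a => (PresentedGroup.of a : GP3 n)).prod

/-! ## The map `f : G_{n+1}^3 → G_{n,p}^3` -/

/-- The word over `G_{n,p}^3` obtained from a word over `G_{n+1}^3` by deleting the letters
containing the index `n+1` and recording parities. -/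
def fWord (n : ℕ) (β : List (TIdx (n + 1))) : List (TPIdx n) :=
  (β.zipIdx.map Prod.swap).filterMap fun x =>
    if x.2.1.2.2 = n + 1 then none
    else (tripMkS n x.2.1.1 x.2.1.2.1 x.2.1.2.2).map fun t =>
      (t, ((cnt3 (β.take x.1) x.2.1.2.1 x.2.1.2.2 (n + 1) +
            cnt3 (β.take x.1) x.2.1.1 x.2.1.2.2 (n + 1) : ℕ) : ZMod 2))

/-! ## The parity invariant `w^p_{ijk}` on `G_{n,p}^3` -/

/-- The group `F_n^3` with values in `ℤ/2` (for the parity invariant). -/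
abbrev F3p (n i j k : ℕ) := FP2 (SIdx3 n i j k → ZMod 2)

/-- The number of occurrences of `a_{\{a,b,c\}}^e` in a word over `G_{n,p}^3`. -/
def cntP3 {n : ℕ} (β : List (TPIdx n)) (a b c : ℕ) (e : ZMod 2) : ℕ :=
  (β.filter fun x => decide (tripSet x.1 = ({a, b, c} : Finset ℕ) ∧ x.2 = e)).length

/-- `i^p_c` for an occurrence of `a_{ijk}^e` with prefix `pre` (here `k > i, j`). -/
def iCP3 {n : ℕ} (i j k : ℕ) (e : ZMod 2) (pre : List (TPIdx n)) : SIdx3 n i j k → ZMod 2 :=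
  fun l =>
    if e = 0 then
      (if k < l.1 then
        ((cntP3 pre i k l.1 0 + cntP3 pre j k l.1 0 + cntP3 pre i j l.1 1 : ℕ) : ZMod 2)
      else ((cntP3 pre i k l.1 0 + cntP3 pre j k l.1 0 : ℕ) : ZMod 2))
    else
      (if k < l.1 then
        ((cntP3 pre i k l.1 0 + cntP3 pre j k l.1 1 + cntP3 pre i j l.1 0 : ℕ) : ZMod 2)
      else ((cntP3 pre i k l.1 0 + cntP3 pre j k l.1 1 : ℕ) : ZMod 2))

/-- The invariant `w^p_{ijk}` of a word over `G_{n,p}^3`. -/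
def wP3 {n : ℕ} (i j k : ℕ) (β : List (TPIdx n)) : F3p n i j k :=
  (((β.zipIdx.map Prod.swap).filter fun x => decide (tripSet x.2.1 = ({i, j, k} : Finset ℕ))).map
    fun x => (PresentedGroup.of (iCP3 i j k x.2.2 (β.take x.1)) : F3p n i j k)).prod

/-- The prescribed image of the generator `a_{ijk}` of `G_{n+1}^3` under `q_m`. -/
def qfun3 (n m : ℕ) (a : TIdx (n + 1)) : G3 n :=
  if m = a.1.1 ∨ m = a.1.2.1 ∨ m = a.1.2.2 then 1
  else ggen3 n (del m a.1.1) (del m a.1.2.1) (del m a.1.2.2)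

/-! Write `f = delZero m` for the deletion of strand `m` that sends `m` itself to the
out-of-range index `0`. Since `ggen3` is trivial off range and depends only on the sorted triple,
`q_m(a_{ijk}) = a_{f i, f j, f k}` for every triple. As `f` is injective on positive indices, it
cannot enlarge the intersection of two triples and keeps the four indices of a tetrahedral relator
distinct. So each relator of `G_{n+1}^3` goes to a relator of `G_n^3`, or, when an index falls out
of range, to an identity in which the three generators through that index are trivial. -/
lemma sort3_map (f : ℕ → ℕ) (a b c : ℕ) :
    sort3 (f (sort3 a b c).1) (f (sort3 a b c).2.1) (f (sort3 a b c).2.2) =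
      sort3 (f a) (f b) (f c) := by
  have hperm : sort3 a b c = (a, b, c) ∨ sort3 a b c = (a, c, b) ∨ sort3 a b c = (b, a, c) ∨
      sort3 a b c = (b, c, a) ∨ sort3 a b c = (c, a, b) ∨ sort3 a b c = (c, b, a) := by
    simp only [sort3, Prod.mk.injEq]; omega
  rcases hperm with h | h | h | h | h | h <;> rw [h] <;> simp only [sort3, Prod.mk.injEq] <;> omega

lemma T3ok_sort3_iff {n a b c : ℕ} :
    T3ok n (sort3 a b c) ↔
      (1 ≤ a ∧ a ≤ n) ∧ (1 ≤ b ∧ b ≤ n) ∧ (1 ≤ c ∧ c ≤ n) ∧ a ≠ b ∧ a ≠ c ∧ b ≠ c := by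
  simp only [T3ok, sort3]; omega

lemma tripSet_sort3 {n a b c : ℕ} (h : T3ok n (sort3 a b c)) :
    tripSet (⟨sort3 a b c, h⟩ : TIdx n) = {a, b, c} := by
  ext x; simp only [tripSet, sort3, Finset.mem_insert, Finset.mem_singleton]; omega

lemma ggen3_congr {n a b c a' b' c' : ℕ} (h : sort3 a b c = sort3 a' b' c') :
    ggen3 n a b c = ggen3 n a' b' c' := by
  simp only [ggen3, h]

lemma ggen3_eq_one {n a b c : ℕ} (h : ¬(1 ≤ a ∧ a ≤ n ∧ 1 ≤ b ∧ b ≤ n ∧ 1 ≤ c ∧ c ≤ n)) :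
    ggen3 n a b c = 1 :=
  dif_neg (by rw [T3ok_sort3_iff]; tauto)

lemma mk_fgen3 (n a b c : ℕ) : PresentedGroup.mk (rels3 n) (fgen3 n a b c) = ggen3 n a b c := by
  unfold fgen3 ggen3; split_ifs <;> simp [PresentedGroup.of]

lemma of_mul_self {n : ℕ} (a : TIdx n) : (PresentedGroup.of a : G3 n) * PresentedGroup.of a = 1 :=
  PresentedGroup.one_of_mem (Or.inl (Or.inl ⟨a, rfl⟩))

lemma ggen3_mul_self (n a b c : ℕ) : ggen3 n a b c * ggen3 n a b c = 1 := by
  unfold ggen3; split_ifs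
  · exact of_mul_self _
  · exact mul_one 1

lemma of_commute {n : ℕ} {a b : TIdx n} (h : (tripSet a ∩ tripSet b).card < 2) :
    Commute (PresentedGroup.of a : G3 n) (PresentedGroup.of b) := by
  have := PresentedGroup.one_of_mem (rels := rels3 n) (Or.inl (Or.inr ⟨a, b, h, rfl⟩))
  simp only [map_mul, map_inv] at this
  exact commutatorElement_eq_one_iff_commute.mp this

lemma ggen3_commute {n a b c a' b' c' : ℕ}
    (h : (({a, b, c} : Finset ℕ) ∩ {a', b', c'}).card < 2) :
    Commute (ggen3 n a b c) (ggen3 n a' b' c') := by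
  unfold ggen3
  split_ifs with h₁ h₂
  · exact of_commute (by rwa [tripSet_sort3, tripSet_sort3])
  all_goals simp

lemma ggen3_tetrahedron {n i j k l : ℕ}
    (hij : i ≠ j) (hik : i ≠ k) (hil : i ≠ l) (hjk : j ≠ k) (hjl : j ≠ l) (hkl : k ≠ l) :
    ggen3 n i j k * ggen3 n i j l * ggen3 n i k l * ggen3 n j k l =
      ggen3 n j k l * ggen3 n i k l * ggen3 n i j l * ggen3 n i j k := by
  by_cases hr : (1 ≤ i ∧ i ≤ n) ∧ (1 ≤ j ∧ j ≤ n) ∧ (1 ≤ k ∧ k ≤ n) ∧ (1 ≤ l ∧ l ≤ n)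
  · obtain ⟨⟨hi1, hi2⟩, ⟨hj1, hj2⟩, ⟨hk1, hk2⟩, ⟨hl1, hl2⟩⟩ := hr
    simpa only [map_mul, mk_fgen3] using PresentedGroup.mk_eq_mk_of_mul_inv_mem (rels := rels3 n)
      (Or.inr ⟨i, j, k, l, hi1, hi2, hj1, hj2, hk1, hk2, hl1, hl2, hij, hik, hil, hjk, hjl, hkl, rfl⟩)
  · have hout : ¬(1 ≤ i ∧ i ≤ n) ∨ ¬(1 ≤ j ∧ j ≤ n) ∨ ¬(1 ≤ k ∧ k ≤ n) ∨ ¬(1 ≤ l ∧ l ≤ n) := by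
      tauto
    rcases hout with h | h | h | h <;> simp (disch := omega) only [ggen3_eq_one, one_mul, mul_one]

-- The deleted strand goes to the out-of-range index `0`, where `ggen3` is trivial.
def delZero (m x : ℕ) : ℕ := if m = x then 0 else del m x

lemma delZero_injOn (m : ℕ) : Set.InjOn (delZero m) {x | 1 ≤ x} := by
  intro x hx y hy h
  simp only [Set.mem_ofPred_eq] at hx hy
  simp only [delZero, del] at h
  split_ifs at h <;> omega

lemma qfun3_eq_ggen3_delZero (n m : ℕ) (a : TIdx (n + 1)) :
    qfun3 n m a = ggen3 n (delZero m a.1.1) (delZero m a.1.2.1) (delZero m a.1.2.2) := by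
  unfold qfun3
  split_ifs with h
  · refine (ggen3_eq_one ?_).symm
    simp only [delZero]
    split_ifs <;> omega
  · push Not at h
    simp only [delZero, if_neg h.1, if_neg h.2.1, if_neg h.2.2]

lemma mem_Icc_of_delZero_mem_Icc {n m x : ℕ} (h : delZero m x ∈ Set.Icc 1 n) :
    x ∈ Set.Icc 1 (n + 1) := by
  simp only [Set.mem_Icc, delZero, del] at h ⊢
  split_ifs at h <;> omega

lemma T3ok_of_T3ok_delZero {n m a b c : ℕ}
    (h : T3ok n (sort3 (delZero m a) (delZero m b) (delZero m c))) :
    T3ok (n + 1) (sort3 a b c) := by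
  rw [T3ok_sort3_iff] at h ⊢
  obtain ⟨ha, hb, hc, hab, hac, hbc⟩ := h
  exact ⟨mem_Icc_of_delZero_mem_Icc ha, mem_Icc_of_delZero_mem_Icc hb,
    mem_Icc_of_delZero_mem_Icc hc, mt (congrArg _) hab, mt (congrArg _) hac, mt (congrArg _) hbc⟩

lemma lift_qfun3_fgen3 (n m a b c : ℕ) :
    FreeGroup.lift (qfun3 n m) (fgen3 (n + 1) a b c) =
      ggen3 n (delZero m a) (delZero m b) (delZero m c) := by
  unfold fgen3
  split_ifs with h
  · rw [FreeGroup.lift_apply_of, qfun3_eq_ggen3_delZero]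
    exact ggen3_congr (sort3_map (delZero m) a b c)
  · rw [map_one, ggen3, dif_neg (mt T3ok_of_T3ok_delZero h)]

lemma card_image_delZero_inter_lt {n : ℕ} (m : ℕ) {a b : TIdx (n + 1)}
    (h : (tripSet a ∩ tripSet b).card < 2) :
    (({delZero m a.1.1, delZero m a.1.2.1, delZero m a.1.2.2} : Finset ℕ) ∩
      {delZero m b.1.1, delZero m b.1.2.1, delZero m b.1.2.2}).card < 2 := by
  have himage : ∀ t : TIdx (n + 1),
      ({delZero m t.1.1, delZero m t.1.2.1, delZero m t.1.2.2} : Finset ℕ) =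
        (tripSet t).image (delZero m) := by
    intro t; simp [tripSet, Finset.image_insert]
  have hpos : ∀ t : TIdx (n + 1), ↑(tripSet t) ⊆ {x : ℕ | 1 ≤ x} := by
    intro t x hx
    simp only [tripSet, Finset.coe_insert, Finset.coe_singleton, Set.mem_insert_iff,
      Set.mem_singleton_iff] at hx
    have := t.2
    simp only [Set.mem_ofPred_eq]; omega
  rw [himage, himage, ← Finset.image_inter_of_injOn _ _
    ((delZero_injOn m).mono (Set.union_subset (hpos a) (hpos b)))]
  exact Finset.card_image_le.trans_lt h

theorem statement_0_general (n m : ℕ) :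
    (∀ r ∈ rels3 (n + 1), FreeGroup.lift (qfun3 n m) r = 1) ∧
    (∃ q : G3 (n + 1) →* G3 n, ∀ a : TIdx (n + 1),
        q (PresentedGroup.of a) = qfun3 n m a) := by
  have hf := delZero_injOn m
  have hrels : ∀ r ∈ rels3 (n + 1), FreeGroup.lift (qfun3 n m) r = 1 := by
    rintro r ((⟨a, rfl⟩ | ⟨a, b, hab, rfl⟩) |
      ⟨i, j, k, l, hi, -, hj, -, hk, -, hl, -, hij, hik, hil, hjk, hjl, hkl, rfl⟩)
    · simp only [map_mul, FreeGroup.lift_apply_of, qfun3_eq_ggen3_delZero, ggen3_mul_self]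
    · simp only [map_mul, map_inv, FreeGroup.lift_apply_of, qfun3_eq_ggen3_delZero]
      exact commutatorElement_eq_one_iff_commute.mpr
        (ggen3_commute (card_image_delZero_inter_lt m hab))
    · simp only [map_mul, map_inv, lift_qfun3_fgen3, mul_inv_eq_one]
      exact ggen3_tetrahedron (hf.ne hi hj hij) (hf.ne hi hk hik) (hf.ne hi hl hil)
        (hf.ne hj hk hjk) (hf.ne hj hl hjl) (hf.ne hk hl hkl)
  exact ⟨hrels, PresentedGroup.toGroup hrels, fun a => PresentedGroup.toGroup.of hrels⟩

theorem statement_0 (n m : ℕ) (hn : 3 ≤ n) (hm1 : 1 ≤ m) (hm2 : m ≤ n + 1) :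
    (∀ r ∈ rels3 (n + 1), FreeGroup.lift (qfun3 n m) r = 1) ∧
    (∃ q : G3 (n + 1) →* G3 n, ∀ a : TIdx (n + 1),
        q (PresentedGroup.of a) = qfun3 n m a) :=
  statement_0_general n m

end GnkBrunnian
end

section
/- Let n ≥ 4, 1 ≤ m ≤ n, and 1 ≤ i < j ≤ n. Then q_m(c^n_{i,j}) = 1 if m ∈ {i,j}; q_m(c^n_{i,j}) = c^{n-1}_{i,j} if i,j < m; q_m(c^n_{i,j}) = c^{n-1}_{i,(j-1)} if i < m < j; and q_m(c^n_{i,j}) = c^{n-1}_{(i-1),(j-1)} if m < i < j. -/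
namespace GnkBrunnian

/-! `q_m` kills the factor `a_{ijk}` of `c^n_{i,j}` with `k = m` and relabels every other one by
`del m`. Removing `m` from the index list `j+1, …, n, 1, …, j-1` and applying `del m` yields the
index list of `c^{n-1}_{del m i, del m j}`, so `q_m(c^n_{i,j}) = c^{n-1}_{del m i, del m j}`
whenever `m ∉ {i, j}`; if `m ∈ {i, j}` every factor dies. -/

lemma sort3_rotate (a b c : ℕ) : sort3 a b c = sort3 c a b := by
  simp only [sort3, Prod.mk.injEq]; omega

lemma sort3_swap (a b c : ℕ) : sort3 a b c = sort3 a c b := by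
  simp only [sort3, Prod.mk.injEq]; omega

lemma ggen3_rotate (n a b c : ℕ) : ggen3 n a b c = ggen3 n c a b := by
  unfold ggen3; rw [sort3_rotate]

lemma ggen3_swap (n a b c : ℕ) : ggen3 n a b c = ggen3 n a c b := by
  unfold ggen3; rw [sort3_swap]

lemma ggen3_self_left (n a b : ℕ) : ggen3 n a b a = 1 := by
  rw [ggen3, dif_neg]
  rintro ⟨-, h₁, h₂, -⟩
  simp only [sort3] at h₁ h₂
  omega

lemma del_of_le {m x : ℕ} (h : x ≤ m) : del m x = x := if_neg (by omega)

lemma del_of_lt {m x : ℕ} (h : m < x) : del m x = x - 1 := if_pos h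

theorem _root_.List.prod_map_ite_one {α M : Type*} [Monoid M] (p : α → Prop) [DecidablePred p]
    (f : α → M) (l : List α) :
    (l.map fun a => if p a then 1 else f a).prod = ((l.filter fun a => ¬p a).map f).prod := by
  induction l with
  | nil => rfl
  | cons a l ih => by_cases h : p a <;> simp [h, ih]

lemma map_del_range'_of_lt {m s : ℕ} (h : m < s) (t : ℕ) :
    (List.range' s t).map (del m) = List.range' (s - 1) t := by
  rw [← List.map_sub_range' (by omega : 1 ≤ s)]
  refine List.map_congr_left fun k hk => del_of_lt ?_
  rw [List.mem_range'_1] at hk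
  omega

lemma map_del_range'_of_le {m s t : ℕ} (h : s + t ≤ m + 1) :
    (List.range' s t).map (del m) = List.range' s t := by
  conv_rhs => rw [← List.map_id (List.range' s t)]
  refine List.map_congr_left fun k hk => del_of_le ?_
  rw [List.mem_range'_1] at hk
  omega

lemma filter_ne_range'_of_not_mem {m s t : ℕ} (h : m < s ∨ s + t ≤ m) :
    (List.range' s t).filter (· ≠ m) = List.range' s t := by
  refine List.filter_eq_self.2 fun k hk => ?_
  rw [List.mem_range'_1] at hk
  simp only [ne_eq, decide_eq_true_eq]
  omega

lemma map_del_filter_ne_range' {m s t : ℕ} (hs : s ≤ m) (ht : m < s + t) :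
    ((List.range' s t).filter (· ≠ m)).map (del m) = List.range' s (t - 1) := by
  obtain ⟨a, b, rfl, rfl⟩ : ∃ a b, m = s + a ∧ t = a + 1 + b :=
    ⟨m - s, t - (m - s) - 1, by omega, by omega⟩
  rw [← List.range'_append_1, ← List.range'_append_1, List.range'_one, List.filter_append,
    List.filter_append, filter_ne_range'_of_not_mem (by omega),
    filter_ne_range'_of_not_mem (by omega), List.filter_singleton,
    decide_eq_false (not_not_intro rfl)]
  simp only [List.map_append, map_del_range'_of_le (by omega : s + a ≤ s + a + 1),
    map_del_range'_of_lt (by omega : s + a < s + (a + 1)), cond_false, List.append_nil]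
  rw [show a + 1 + b - 1 = a + b by omega, ← List.range'_append_1,
    show s + (a + 1) - 1 = s + a by omega]

-- The list also contains `k = i`, whose factor `ggen3 n i j i` is trivial.
def cIndices (n j : ℕ) : List ℕ := List.range' (j + 1) (n - j) ++ List.range' 1 (j - 1)

lemma cElt_eq_prod (n i j : ℕ) : cElt n i j = ((cIndices n j).map (ggen3 n i j)).prod := by
  rw [cIndices, List.map_append, List.prod_append]
  rfl

lemma mem_cIndices {n j k : ℕ} (hj : j ≤ n) (hk : k ∈ cIndices n j) : 1 ≤ k ∧ k ≤ n := by
  simp only [cIndices, List.mem_append, List.mem_range'_1] at hk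
  omega

lemma map_del_filter_ne_cIndices {n m j : ℕ} (hm : 1 ≤ m) (hmn : m ≤ n) (hmj : m ≠ j) :
    ((cIndices n j).filter (· ≠ m)).map (del m) = cIndices (n - 1) (del m j) := by
  rw [cIndices, List.filter_append, List.map_append]
  rcases Nat.lt_or_gt_of_ne hmj with hmj | hjm
  · rw [filter_ne_range'_of_not_mem (by omega), map_del_range'_of_lt (by omega),
      map_del_filter_ne_range' hm (by omega), del_of_lt hmj, cIndices]
    congr 2 <;> omega
  · rw [map_del_filter_ne_range' (by omega) (by omega), filter_ne_range'_of_not_mem (by omega),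
      map_del_range'_of_le (by omega), del_of_le hjm.le, cIndices]
    congr 2
    omega

namespace IsShift3

variable {n m : ℕ} {q : G3 n →* G3 (n - 1)}

theorem map_ggen3 (hq : IsShift3 n m q) {i j k : ℕ} (hi : 1 ≤ i) (hij : i < j) (hjn : j ≤ n)
    (hk : 1 ≤ k) (hkn : k ≤ n) :
    q (ggen3 n i j k) =
      if m = i ∨ m = j ∨ m = k then 1 else ggen3 (n - 1) (del m i) (del m j) (del m k) := by
  rcases lt_trichotomy k i with hki | rfl | hik
  · rw [ggen3_rotate, hq k i j hk hki hij hjn, ggen3_rotate (n - 1) (del m i)]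
    exact if_congr (by tauto) rfl rfl
  · rw [ggen3_self_left, map_one, ggen3_self_left, ite_self]
  rcases lt_trichotomy k j with hkj | rfl | hjk
  · rw [ggen3_swap, hq i k j hi hik hkj hjn, ggen3_swap (n - 1) (del m i)]
    exact if_congr (by tauto) rfl rfl
  · rw [ggen3_rotate, ggen3_self_left, map_one, ggen3_rotate, ggen3_self_left, ite_self]
  · exact hq i j k hi hij hjk hkn

theorem map_cElt_of_mem (hq : IsShift3 n m q) {i j : ℕ} (hi : 1 ≤ i) (hij : i < j)
    (hjn : j ≤ n) (hm : m = i ∨ m = j) : q (cElt n i j) = 1 := by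
  rw [cElt_eq_prod, map_list_prod, List.map_map]
  refine List.prod_eq_one fun x hx => ?_
  obtain ⟨k, hk, rfl⟩ := List.mem_map.1 hx
  obtain ⟨hk1, hkn⟩ := mem_cIndices hjn hk
  rw [Function.comp_apply, hq.map_ggen3 hi hij hjn hk1 hkn, if_pos (by tauto)]

theorem map_cElt (hq : IsShift3 n m q) {i j : ℕ} (hi : 1 ≤ i) (hij : i < j) (hjn : j ≤ n)
    (hm : 1 ≤ m) (hmn : m ≤ n) (hmi : m ≠ i) (hmj : m ≠ j) :
    q (cElt n i j) = cElt (n - 1) (del m i) (del m j) := by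
  have hfactor : ∀ k ∈ cIndices n j, (q ∘ ggen3 n i j) k =
      if k = m then 1 else (ggen3 (n - 1) (del m i) (del m j) ∘ del m) k := by
    intro k hk
    obtain ⟨hk1, hkn⟩ := mem_cIndices hjn hk
    rw [Function.comp_apply, hq.map_ggen3 hi hij hjn hk1 hkn]
    exact if_congr (by omega) rfl rfl
  rw [cElt_eq_prod, map_list_prod, List.map_map, List.map_congr_left hfactor,
    List.prod_map_ite_one, ← List.map_map, map_del_filter_ne_cIndices hm hmn hmj, cElt_eq_prod]

end IsShift3

theorem statement_2_general (n m : ℕ) (hm1 : 1 ≤ m) (hm2 : m ≤ n)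
    (q : G3 n →* G3 (n - 1)) (hq : IsShift3 n m q)
    (i j : ℕ) (hi : 1 ≤ i) (hij : i < j) (hj : j ≤ n) :
    ((m = i ∨ m = j) → q (cElt n i j) = 1) ∧
    (i < m ∧ j < m → q (cElt n i j) = cElt (n - 1) i j) ∧
    (i < m ∧ m < j → q (cElt n i j) = cElt (n - 1) i (j - 1)) ∧
    (m < i → q (cElt n i j) = cElt (n - 1) (i - 1) (j - 1)) := by
  refine ⟨hq.map_cElt_of_mem hi hij hj, fun ⟨him, hjm⟩ => ?_, fun ⟨him, hmj⟩ => ?_, fun hmi => ?_⟩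
  · rw [hq.map_cElt hi hij hj hm1 hm2 him.ne' hjm.ne', del_of_le him.le, del_of_le hjm.le]
  · rw [hq.map_cElt hi hij hj hm1 hm2 him.ne' hmj.ne, del_of_le him.le, del_of_lt hmj]
  · rw [hq.map_cElt hi hij hj hm1 hm2 hmi.ne (hmi.trans hij).ne, del_of_lt hmi,
      del_of_lt (hmi.trans hij)]

theorem statement_2 (n m : ℕ) (hn : 4 ≤ n) (hm1 : 1 ≤ m) (hm2 : m ≤ n)
    (q : G3 n →* G3 (n - 1)) (hq : IsShift3 n m q)
    (i j : ℕ) (hi : 1 ≤ i) (hij : i < j) (hj : j ≤ n) :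
    ((m = i ∨ m = j) → q (cElt n i j) = 1) ∧
    (i < m ∧ j < m → q (cElt n i j) = cElt (n - 1) i j) ∧
    (i < m ∧ m < j → q (cElt n i j) = cElt (n - 1) i (j - 1)) ∧
    (m < i → q (cElt n i j) = cElt (n - 1) (i - 1) (j - 1)) :=
  statement_2_general n m hm1 hm2 q hq i j hi hij hj

end GnkBrunnian
end

section
/- Fix n ≥ 4 and distinct i,j,k ∈ {1,…,n}. If β and β′ are words in the generators of G_n^3 that are both in good condition and represent the same element of G_n^3, then w_{(i,j,k)}(β) = w_{(i,j,k)}(β′) in F_n^3. In other words, w_{(i,j,k)} is a well-defined invariant on the subgroup of good-condition elements of G_n^3. -/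
namespace GnkBrunnian

/-!
Read a word `β` letter by letter, keeping the pair `(w₃(β), i(β))`, where
`i(β) : {1,…,n} ∖ {i,j,k} → (ℤ/2)²` is the value `i_c` would take after all of `β`.
Appending a word `γ` updates the pair by `(w, d) · (w', d') = (w · τ_d(w'), d + d')`, where `τ_d`
translates the free generators of `F_n^3` by `d`: this is multiplication in the semidirect product
`F_n^3 ⋊ (ℤ/2)^{2(n-3)}`. Hence `β ↦ (w₃(β), i(β))` is the product of the images of the letters,
and it factors through `G_n^3` as soon as these images satisfy the defining relations.
The letter `a_{ijk}` does not change `i`, so its image is an involution; a letter meeting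
`{i,j,k}` in fewer than two points does not change `i` either, which gives the commutation
relations; and when one face of a tetrahedron `T` is `{i,j,k}`, the changes of `i` caused by the
four faces of `T` cancel, so in both sides of the tetrahedron relation the letter `a_{ijk}` is
recorded with the same value of `i`.
-/

theorem erase_eq_triple_of_card_eq_four {T : Finset ℕ} (hT : T.card = 4) {a b c x : ℕ}
    (ha : a ∈ T) (hb : b ∈ T) (hc : c ∈ T) (hab : a ≠ b) (hac : a ≠ c) (hbc : b ≠ c)
    (hax : a ≠ x) (hbx : b ≠ x) (hcx : c ≠ x) (hx : x ∈ T) : T.erase x = {a, b, c} := by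
  refine (Finset.eq_of_subset_of_card_le (fun y hy => ?_) ?_).symm
  · simp only [Finset.mem_insert, Finset.mem_singleton] at hy
    rcases hy with rfl | rfl | rfl <;> simp [*]
  · rw [Finset.card_erase_of_mem hx, hT, Finset.card_eq_three.mpr ⟨a, b, c, hab, hac, hbc, rfl⟩]

namespace FP2

variable {ι κ : Type}

theorem of_mul_self (a : ι) : (PresentedGroup.of a : FP2 ι) * PresentedGroup.of a = 1 :=
  (map_mul (PresentedGroup.mk _) _ _).symm.trans (PresentedGroup.one_of_mem ⟨a, rfl⟩)

def map (f : ι → κ) : FP2 ι →* FP2 κ :=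
  PresentedGroup.toGroup (f := fun a => PresentedGroup.of (f a)) <| by
    rintro _ ⟨a, rfl⟩
    simp only [map_mul, FreeGroup.lift_apply_of, of_mul_self]

@[simp] theorem map_of (f : ι → κ) (a : ι) :
    map f (PresentedGroup.of a) = PresentedGroup.of (f a) :=
  PresentedGroup.toGroup.of _

def mapEquiv (e : ι ≃ κ) : FP2 ι ≃* FP2 κ :=
  (map e).toMulEquiv (map e.symm) (PresentedGroup.ext fun _ => by simp)
    (PresentedGroup.ext fun _ => by simp)

variable [AddCommGroup ι]

def translate : Multiplicative ι →* MulAut (FP2 ι) where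
  toFun d := mapEquiv (Equiv.addRight d.toAdd)
  map_one' := MulEquiv.ext fun x => show map _ x = MonoidHom.id _ x from
    DFunLike.congr_fun (PresentedGroup.ext fun _ => by simp) x
  map_mul' d e := MulEquiv.ext fun x => show map _ x = (map _).comp (map _) x from
    DFunLike.congr_fun (PresentedGroup.ext fun _ => by simp [add_assoc, add_comm e.toAdd]) x

@[simp] theorem translate_of (d : Multiplicative ι) (a : ι) :
    translate d (PresentedGroup.of a : FP2 ι) = PresentedGroup.of (a + d.toAdd) :=
  map_of (Equiv.addRight d.toAdd) a

end FP2

abbrev F3Gen (n i j k : ℕ) := SIdx3 n i j k → ZMod 2 × ZMod 2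

section Invariant

variable {n i j k : ℕ}

theorem F3Gen.add_self (d : F3Gen n i j k) : d + d = 0 :=
  funext fun l => CharTwo.add_self_eq_zero (d l)

theorem F3Gen.eq_of_add_eq_zero {d e : F3Gen n i j k} (h : d + e = 0) : d = e :=
  (eq_neg_of_add_eq_zero_left h).trans (neg_eq_of_add_eq_zero_right (F3Gen.add_self e))

variable (n i j k) in
def faceShift (s : Finset ℕ) : F3Gen n i j k := fun l =>
  ((if s = {j, k, l.1} then 1 else 0) + (if s = {i, j, l.1} then 1 else 0),
   (if s = {i, k, l.1} then 1 else 0) + (if s = {i, j, l.1} then 1 else 0))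

theorem faceShift_triple_self : faceShift n i j k {i, j, k} = 0 := by
  funext l
  obtain ⟨l, -, hli, hlj, hlk⟩ := l
  have hne : ∀ a b : ℕ, ({i, j, k} : Finset ℕ) ≠ {a, b, l} := fun a b =>
    (ne_of_mem_of_not_mem' (a := l) (by simp) (by simp [hli, hlj, hlk])).symm
  simp [faceShift, hne]

theorem faceShift_eq_zero_of_card_inter_lt (hij : i ≠ j) (hik : i ≠ k) (hjk : j ≠ k)
    {s : Finset ℕ} (hs : (s ∩ {i, j, k}).card < 2) : faceShift n i j k s = 0 := by
  have hne : ∀ a ∈ ({i, j, k} : Finset ℕ), ∀ b ∈ ({i, j, k} : Finset ℕ), a ≠ b →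
      ∀ x, s ≠ {a, b, x} := by
    rintro a ha b hb hab x rfl
    have hsub : ({a, b} : Finset ℕ) ⊆ {a, b, x} ∩ {i, j, k} := by
      simp [Finset.insert_subset_iff, ha, hb]
    have := Finset.card_le_card hsub
    rw [Finset.card_pair hab] at this
    omega
  funext l
  simp [faceShift, hne j (by simp) k (by simp) hjk, hne i (by simp) j (by simp) hij,
    hne i (by simp) k (by simp) hik]

theorem sum_faceShift_erase (hij : i ≠ j) (hik : i ≠ k) (hjk : j ≠ k) {T : Finset ℕ}
    (hT : T.card = 4) (hi : i ∈ T) (hj : j ∈ T) (hk : k ∈ T) :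
    ∑ x ∈ T, faceShift n i j k (T.erase x) = 0 := by
  funext l
  obtain ⟨l, -, hli, hlj, hlk⟩ := l
  rw [Finset.sum_apply]
  by_cases hl : l ∈ T
  · have hcount : ∀ y ∈ T, ∑ x ∈ T, (if T.erase x = T.erase y then (1 : ZMod 2) else 0) = 1 :=
      fun y hy => by
        rw [Finset.sum_congr rfl (g := fun x => if x = y then 1 else 0) fun x hx => by
          simp only [Finset.erase_inj T hx]]
        simp [hy]
    simp only [faceShift]
    -- `{j,k,l}`, `{i,j,l}`, `{i,k,l}` are the faces `T ∖ i`, `T ∖ k`, `T ∖ j`, each met once.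
    rw [← erase_eq_triple_of_card_eq_four hT hj hk hl hjk (Ne.symm hlj) (Ne.symm hlk) (Ne.symm hij)
        (Ne.symm hik) hli hi, ← erase_eq_triple_of_card_eq_four hT hi hj hl hij (Ne.symm hli)
        (Ne.symm hlj) hik hjk hlk hk, ← erase_eq_triple_of_card_eq_four hT hi hk hl hik (Ne.symm hli)
        (Ne.symm hlk) hij (Ne.symm hjk) hlj hj]
    ext <;> simp only [Prod.fst_sum, Prod.snd_sum, Finset.sum_add_distrib, hcount _ hi,
      hcount _ hj, hcount _ hk, CharTwo.add_self_eq_zero, Pi.zero_apply, Prod.fst_zero,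
      Prod.snd_zero]
  · have hne : ∀ x a b, T.erase x ≠ {a, b, l} := fun x a b =>
      ne_of_mem_of_not_mem' (t := T.erase x) (a := l) (by simp)
        (fun h => hl (Finset.mem_of_mem_erase h)) |>.symm
    simp [faceShift, hne]

theorem iC3_nil : iC3 i j k ([] : List (TIdx n)) = 0 := rfl

theorem iC3_append (β γ : List (TIdx n)) : iC3 i j k (β ++ γ) = iC3 i j k β + iC3 i j k γ := by
  funext l
  simp only [iC3, cnt3, List.filter_append, List.length_append, Pi.add_apply, Prod.mk_add_mk]
  push_cast
  ring_nf

theorem iC3_singleton (g : TIdx n) : iC3 i j k [g] = faceShift n i j k (tripSet g) := by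
  funext l
  simp only [iC3, cnt3, faceShift, List.filter_singleton]
  split_ifs <;> simp_all [one_add_one_eq_two]

theorem iC3_reverse (β : List (TIdx n)) : iC3 i j k β.reverse = iC3 i j k β := by
  funext l
  simp only [iC3, cnt3, List.filter_reverse, List.length_reverse]

theorem iC3_eq_sum (β : List (TIdx n)) :
    iC3 i j k β = ((β.map tripSet).map (faceShift n i j k)).sum := by
  induction β with
  | nil => rfl
  | cons g β ih => rw [← List.singleton_append, iC3_append, iC3_singleton, ih]; simp

theorem w3_concat (β : List (TIdx n)) (g : TIdx n) :
    w3 i j k (β ++ [g]) =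
      w3 i j k β * if tripSet g = {i, j, k} then PresentedGroup.of (iC3 i j k β) else 1 := by
  have hprefix : ∀ x ∈ β.zipIdx.map Prod.swap, (β ++ [g]).take x.1 = β.take x.1 := by
    simp only [List.mem_map, Prod.exists, Prod.swap_prod_mk]
    rintro _ ⟨a, m, hm, rfl⟩
    exact List.take_append_of_le_length (List.mem_zipIdx' hm).1.le
  simp only [w3, List.zipIdx_append, List.map_append, List.filter_append, List.prod_append,
    List.zipIdx_singleton, zero_add, List.map_singleton, Prod.swap_prod_mk]
  congr 1
  · exact congrArg List.prod (List.map_congr_left fun x hx =>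
      by rw [hprefix x (List.mem_of_mem_filter hx)])
  · by_cases h : tripSet g = {i, j, k} <;> simp [h]

variable (n i j k) in
abbrev MNGroup := SemidirectProduct (F3 n i j k) (Multiplicative (F3Gen n i j k)) FP2.translate

variable (i j k) in
def mnLetter (g : TIdx n) : MNGroup n i j k :=
  ⟨if tripSet g = {i, j, k} then PresentedGroup.of 0 else 1, Multiplicative.ofAdd (iC3 i j k [g])⟩

theorem prod_map_mnLetter (β : List (TIdx n)) :
    (β.map (mnLetter i j k)).prod = ⟨w3 i j k β, Multiplicative.ofAdd (iC3 i j k β)⟩ := by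
  induction β using List.reverseRecOn with
  | nil => rfl
  | append_singleton β g ih =>
    rw [List.map_append, List.prod_append, ih, List.map_singleton, List.prod_singleton]
    refine SemidirectProduct.ext ?_ ?_
    · rw [SemidirectProduct.mul_left, w3_concat]
      split_ifs with h <;> simp [mnLetter, h]
    · simp [mnLetter, iC3_append]

open SemidirectProduct in
theorem mnLetter_of_eq (g : TIdx n) (hg : tripSet g = {i, j, k}) :
    mnLetter i j k g = inl (PresentedGroup.of 0) := by
  simp [mnLetter, hg, iC3_singleton, faceShift_triple_self]

open SemidirectProduct in
theorem mnLetter_of_ne (g : TIdx n) (hg : tripSet g ≠ {i, j, k}) :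
    mnLetter i j k g = inr (Multiplicative.ofAdd (iC3 i j k [g])) := by
  simp [mnLetter, hg]

theorem mnLetter_mul_self (g : TIdx n) : mnLetter i j k g * mnLetter i j k g = 1 := by
  by_cases hg : tripSet g = {i, j, k}
  · rw [mnLetter_of_eq g hg, ← map_mul, FP2.of_mul_self, map_one]
  · rw [mnLetter_of_ne g hg, ← map_mul, ← ofAdd_add, F3Gen.add_self, ofAdd_zero, map_one]

theorem mnLetter_commute (hij : i ≠ j) (hik : i ≠ k) (hjk : j ≠ k) (a b : TIdx n)
    (hab : (tripSet a ∩ tripSet b).card < 2) : Commute (mnLetter i j k a) (mnLetter i j k b) := by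
  have eq_one : ∀ {c d : TIdx n}, tripSet c = {i, j, k} → tripSet d ≠ {i, j, k} →
      (tripSet c ∩ tripSet d).card < 2 → mnLetter i j k d = 1 := fun hc hd hcd => by
    rw [mnLetter_of_ne _ hd, iC3_singleton, faceShift_eq_zero_of_card_inter_lt hij hik hjk
      (by rwa [Finset.inter_comm, ← hc]), ofAdd_zero, map_one]
  by_cases ha : tripSet a = {i, j, k} <;> by_cases hb : tripSet b = {i, j, k}
  · rw [mnLetter_of_eq a ha, mnLetter_of_eq b hb]
  · rw [eq_one ha hb hab]
    exact Commute.one_right _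
  · rw [eq_one hb ha (by rwa [Finset.inter_comm])]
    exact Commute.one_left _
  · rw [mnLetter_of_ne a ha, mnLetter_of_ne b hb]
    exact (Commute.all _ _).map _

theorem prod_map_mnLetter_of_not_mem {β : List (TIdx n)} (hβ : {i, j, k} ∉ β.map tripSet) :
    (β.map (mnLetter i j k)).prod = SemidirectProduct.inr (Multiplicative.ofAdd (iC3 i j k β)) := by
  induction β with
  | nil => simp [iC3_nil]
  | cons g β ih =>
    rw [List.map_cons, List.mem_cons, not_or] at hβ
    rw [List.map_cons, List.prod_cons, ih hβ.2, mnLetter_of_ne g (Ne.symm hβ.1), ← map_mul,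
      ← ofAdd_add, ← iC3_append, List.singleton_append]

theorem prod_map_reverse_mnLetter {β : List (TIdx n)} (hβ : (β.map tripSet).count {i, j, k} ≤ 1)
    (h0 : {i, j, k} ∈ β.map tripSet → iC3 i j k β = 0) :
    (β.reverse.map (mnLetter i j k)).prod = (β.map (mnLetter i j k)).prod := by
  have not_mem_reverse : ∀ {γ : List (TIdx n)}, {i, j, k} ∉ γ.map tripSet →
      {i, j, k} ∉ γ.reverse.map tripSet := fun h => by rwa [List.map_reverse, List.mem_reverse]
  by_cases hX : {i, j, k} ∈ β.map tripSet
  · obtain ⟨X, hXβ, hX'⟩ := List.mem_map.mp hX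
    obtain ⟨pre, suf, rfl⟩ := List.append_of_mem hXβ
    have hfree : {i, j, k} ∉ pre.map tripSet ∧ {i, j, k} ∉ suf.map tripSet := by
      simp only [List.map_append, List.map_cons, List.count_append, List.count_cons, hX',
        beq_self_eq_true, if_true] at hβ
      exact ⟨List.count_eq_zero.mp (by omega), List.count_eq_zero.mp (by omega)⟩
    have hshift : iC3 i j k pre = iC3 i j k suf := by
      have h := h0 hX
      rw [iC3_append, ← List.singleton_append, iC3_append, iC3_singleton, hX',
        faceShift_triple_self, zero_add] at h
      exact F3Gen.eq_of_add_eq_zero h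
    rw [List.reverse_append, List.reverse_cons, List.append_assoc, List.singleton_append]
    simp only [List.map_append, List.map_cons, List.prod_append, List.prod_cons]
    rw [prod_map_mnLetter_of_not_mem hfree.1, prod_map_mnLetter_of_not_mem hfree.2,
      prod_map_mnLetter_of_not_mem (not_mem_reverse hfree.1),
      prod_map_mnLetter_of_not_mem (not_mem_reverse hfree.2), iC3_reverse, iC3_reverse, hshift]
  · rw [prod_map_mnLetter_of_not_mem hX, prod_map_mnLetter_of_not_mem (not_mem_reverse hX),
      iC3_reverse]

theorem exists_fgen3_eq_of {a b c : ℕ} (ha : 1 ≤ a ∧ a ≤ n) (hb : 1 ≤ b ∧ b ≤ n)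
    (hc : 1 ≤ c ∧ c ≤ n) (hab : a ≠ b) (hac : a ≠ c) (hbc : b ≠ c) :
    ∃ g : TIdx n, fgen3 n a b c = FreeGroup.of g ∧ tripSet g = {a, b, c} := by
  have hok : T3ok n (sort3 a b c) := by
    simp only [T3ok, sort3]
    omega
  refine ⟨⟨sort3 a b c, hok⟩, dif_pos hok, ?_⟩
  ext x
  simp only [tripSet, sort3, Finset.mem_insert, Finset.mem_singleton]
  omega

theorem mnLetter_tetrahedron (hij : i ≠ j) (hik : i ≠ k) (hjk : j ≠ k) {p q u v : ℕ}
    (hpq : p ≠ q) (hpu : p ≠ u) (hpv : p ≠ v) (hqu : q ≠ u) (hqv : q ≠ v) (huv : u ≠ v)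
    {A B C D : TIdx n} (hA : tripSet A = {p, q, u}) (hB : tripSet B = {p, q, v})
    (hC : tripSet C = {p, u, v}) (hD : tripSet D = {q, u, v}) :
    mnLetter i j k A * mnLetter i j k B * mnLetter i j k C * mnLetter i j k D =
      mnLetter i j k D * mnLetter i j k C * mnLetter i j k B * mnLetter i j k A := by
  set xs := [v, u, q, p]
  have hxs : xs.Nodup := by
    simp [xs, Ne.symm hpq, Ne.symm hpu, Ne.symm hpv, Ne.symm hqu, Ne.symm hqv, Ne.symm huv]
  set T := xs.toFinset
  have hT : T.card = 4 := List.toFinset_card_of_nodup hxs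
  have hfaces : [A, B, C, D].map tripSet = xs.map T.erase := by
    simp only [List.map_cons, List.map_nil, hA, hB, hC, hD, xs, List.cons.injEq, and_true]
    refine ⟨?_, ?_, ?_, ?_⟩ <;> ext x <;> simp [T, xs] <;> omega
  have hnodup : (xs.map T.erase).Nodup :=
    hxs.map_on fun x hx _ _ => (Finset.erase_inj T (List.mem_toFinset.mpr hx)).mp
  have key := prod_map_reverse_mnLetter (i := i) (j := j) (k := k) (β := [A, B, C, D])
    (by rw [hfaces]; exact List.nodup_iff_count_le_one.mp hnodup _) fun hmem => by
      rw [hfaces] at hmem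
      obtain ⟨x, -, hx⟩ := List.mem_map.mp hmem
      have hsub : {i, j, k} ⊆ T := hx ▸ Finset.erase_subset x T
      rw [iC3_eq_sum, hfaces, List.map_map, ← List.sum_toFinset _ hxs]
      exact sum_faceShift_erase hij hik hjk hT (hsub (by simp)) (hsub (by simp)) (hsub (by simp))
  simpa [mul_assoc] using key.symm

theorem mnLetter_rels (hij : i ≠ j) (hik : i ≠ k) (hjk : j ≠ k) :
    ∀ r ∈ rels3 n, FreeGroup.lift (mnLetter i j k) r = 1 := by
  rintro r ((⟨a, rfl⟩ | ⟨a, b, hab, rfl⟩) | ⟨p, q, u, v, hp1, hpn, hq1, hqn, hu1, hun, hv1, hvn,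
    hpq, hpu, hpv, hqu, hqv, huv, rfl⟩)
  · simpa using mnLetter_mul_self a
  · simp [(mnLetter_commute hij hik hjk a b hab).eq]
  · obtain ⟨A, eA, hA⟩ := exists_fgen3_eq_of ⟨hp1, hpn⟩ ⟨hq1, hqn⟩ ⟨hu1, hun⟩ hpq hpu hqu
    obtain ⟨B, eB, hB⟩ := exists_fgen3_eq_of ⟨hp1, hpn⟩ ⟨hq1, hqn⟩ ⟨hv1, hvn⟩ hpq hpv hqv
    obtain ⟨C, eC, hC⟩ := exists_fgen3_eq_of ⟨hp1, hpn⟩ ⟨hu1, hun⟩ ⟨hv1, hvn⟩ hpu hpv huv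
    obtain ⟨D, eD, hD⟩ := exists_fgen3_eq_of ⟨hq1, hqn⟩ ⟨hu1, hun⟩ ⟨hv1, hvn⟩ hqu hqv huv
    simp only [eA, eB, eC, eD, map_mul, map_inv, FreeGroup.lift_apply_of]
    rw [mnLetter_tetrahedron hij hik hjk hpq hpu hpv hqu hqv huv hA hB hC hD, mul_inv_cancel]

variable (i j k) in
def mnHom (hij : i ≠ j) (hik : i ≠ k) (hjk : j ≠ k) : G3 n →* MNGroup n i j k :=
  PresentedGroup.toGroup (mnLetter_rels hij hik hjk)

theorem mnHom_toG3 (hij : i ≠ j) (hik : i ≠ k) (hjk : j ≠ k) (β : List (TIdx n)) :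
    mnHom i j k hij hik hjk (toG3 β) = ⟨w3 i j k β, Multiplicative.ofAdd (iC3 i j k β)⟩ := by
  rw [toG3, map_list_prod, List.map_map, ← prod_map_mnLetter]
  exact congrArg _ (List.map_congr_left fun _ _ => PresentedGroup.toGroup.of _)

end Invariant

theorem statement_6_general (n i j k : ℕ)
    (hij : i ≠ j) (hik : i ≠ k) (hjk : j ≠ k)
    (β β' : List (TIdx n))
    (h : toG3 β = toG3 β') :
    w3 i j k β = w3 i j k β' := by
  have h' := congrArg (mnHom i j k hij hik hjk) h
  rw [mnHom_toG3, mnHom_toG3] at h'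
  exact congrArg SemidirectProduct.left h'

theorem statement_6 (n i j k : ℕ) (hn : 4 ≤ n)
    (hi : 1 ≤ i ∧ i ≤ n) (hj : 1 ≤ j ∧ j ≤ n) (hk : 1 ≤ k ∧ k ≤ n)
    (hij : i ≠ j) (hik : i ≠ k) (hjk : j ≠ k)
    (β β' : List (TIdx n)) (hg : good3 β) (hg' : good3 β')
    (h : toG3 β = toG3 β') :
    w3 i j k β = w3 i j k β' :=
  statement_6_general n i j k hij hik hjk β β' h

end GnkBrunnian
end
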